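/- arXiv:1609.08342 — 3 statements merged into one kernel-verified Lean document; each statement's English description precedes it below -/
import Mathlib

section
/- For every fixed m>0, the map β ↦ Λ_β(m) (with values in the extended non-negative reals) is non-decreasing and convex on [0,∞), and Λ₀(m) = 2·Λ(m), where Λ(m) is obtained from the same formula without the symmetrizing factor, i.e. Λ(m) = sup_{s,K,Q} ((|s|²+Q²)/(π²(1+m))) ℓ_m(s,K,Q)^{−1/2} ∫ |t|^{−2} ℓ_m(t,K,Q)^{−1/2} D(s,t,K,Q) dt. -/
open MeasureTheory Real Filter Topology
open scoped InnerProductSpace ENNReal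

noncomputable section

/-- Three-dimensional Euclidean space. -/
abbrev R3 := EuclideanSpace ℝ (Fin 3)

/-- The kernel `G(q₁,…,q_N)` (here with `N` arguments indexed by `Fin N`). -/
def Gker (m μ : ℝ) {N : ℕ} (q : Fin N → R3) : ℝ :=
  (∑ i, ‖q i‖ ^ 2 + (2 / (m + 1)) * ∑ i, ∑ j ∈ Finset.Ioi i, ⟪q i, q j⟫_ℝ + μ)⁻¹

/-- The function `L(q₁,…,q_{N-1})` (here with `N` arguments indexed by `Fin N`). -/
def Lker (m μ : ℝ) {N : ℕ} (q : Fin N → R3) : ℝ :=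
  2 * π ^ 2 * Real.sqrt ((m * (m + 2) / (m + 1) ^ 2) * ∑ i, ‖q i‖ ^ 2
    + (2 * m / (m + 1) ^ 2) * ∑ i, ∑ j ∈ Finset.Ioi i, ⟪q i, q j⟫_ℝ + μ)

/-- `ℓ_m(s,K,Q)`. -/
def ellm (m : ℝ) (s K : R3) (Q : ℝ) : ℝ :=
  Real.sqrt (m / (m + 1) ^ 2 * ‖s + K‖ ^ 2 + m / (m + 1) * (‖s‖ ^ 2 + Q ^ 2))

/-- The quantity `D(s,t,K,Q)`. -/
def Dker (m : ℝ) (s t K : R3) (Q : ℝ) : ℝ :=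
  |⟪s + (2 + m)⁻¹ • K, t + (2 + m)⁻¹ • K⟫_ℝ| /
    ((‖s + (2 + m)⁻¹ • K‖ ^ 2 + ‖t + (2 + m)⁻¹ • K‖ ^ 2
        + m / (1 + m) * (Q ^ 2 + (2 + m)⁻¹ * ‖K‖ ^ 2)) ^ 2
      - ((2 / (1 + m)) * ⟪s + (2 + m)⁻¹ • K, t + (2 + m)⁻¹ • K⟫_ℝ) ^ 2)

/-- `Λ(m)`, as a supremum in the extended nonnegative reals. -/
def Lam (m : ℝ) : ℝ≥0∞ :=
  ⨆ (s : R3) (K : R3) (Q : ℝ) (_ : 0 < Q),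
    ENNReal.ofReal ((‖s‖ ^ 2 + Q ^ 2) / (π ^ 2 * (1 + m)) / Real.sqrt (ellm m s K Q)) *
      ∫⁻ t : R3, ENNReal.ofReal (Dker m s t K Q / (‖t‖ ^ 2 * Real.sqrt (ellm m t K Q)))

/-- `Λ_β(m)`, as a supremum in the extended nonnegative reals. -/
def Lamb (m β : ℝ) : ℝ≥0∞ :=
  ⨆ (s : R3) (K : R3) (Q : ℝ) (_ : 0 < Q),
    ENNReal.ofReal ((‖s‖ ^ 2 + Q ^ 2) / (π ^ 2 * (1 + m))) *
      ∫⁻ t : R3, ENNReal.ofReal ((1 / ‖t‖ ^ 2) *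
        (ellm m s K Q ^ ((β - 1) / 2) / ellm m t K Q ^ ((β + 1) / 2)
          + ellm m t K Q ^ ((β - 1) / 2) / ellm m s K Q ^ ((β + 1) / 2)) * Dker m s t K Q)

/-!
For `x, y > 0` the symmetrising factor of `Λ_β` is
`x^((β-1)/2) / y^((β+1)/2) + y^((β-1)/2) / x^((β+1)/2) = 2 cosh (β log (x/y) / 2) / √(xy)`,
an even convex function of `β`, hence non-decreasing on `[0, ∞)`, and equal to `2 / (√x √y)` at
`β = 0`. Both properties pass through `ENNReal.ofReal` (which is monotone and convex, so the sign of
`D` does not matter), multiplication by constants, Lebesgue integrals and suprema. Since `ℝ≥0∞` is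
only an `ℝ≥0`-module, convexity of `ℝ≥0∞`-valued functions is expressed as `ConvexOn ℝ≥0`.
-/

open Set
open scoped NNReal

section ConvexENNReal

variable {E : Type*} [AddCommMonoid E] [SMul ℝ≥0 E] {s : Set E}

theorem ENNReal.convexOn_iSup {ι : Sort*} {f : ι → E → ℝ≥0∞} (hs : Convex ℝ≥0 s)
    (hf : ∀ i, ConvexOn ℝ≥0 s (f i)) : ConvexOn ℝ≥0 s fun x => ⨆ i, f i x := by
  refine ⟨hs, fun x hx y hy a b ha hb hab => iSup_le fun i => ((hf i).2 hx hy ha hb hab).trans ?_⟩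
  simp only [ENNReal.smul_def, smul_eq_mul]
  gcongr <;> exact le_iSup (f · _) i

theorem ConvexOn.ennreal_const_mul {f : E → ℝ≥0∞} (hf : ConvexOn ℝ≥0 s f) (c : ℝ≥0∞) :
    ConvexOn ℝ≥0 s fun x => c * f x := by
  refine ⟨hf.1, fun x hx y hy a b ha hb hab => ?_⟩
  calc c * f (a • x + b • y) ≤ c * (a • f x + b • f y) := by gcongr; exact hf.2 hx hy ha hb hab
    _ = a • (c * f x) + b • (c * f y) := by simp only [ENNReal.smul_def, smul_eq_mul]; ring

theorem ConvexOn.ennreal_mul_const {f : E → ℝ≥0∞} (hf : ConvexOn ℝ≥0 s f) (c : ℝ≥0∞) :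
    ConvexOn ℝ≥0 s fun x => f x * c := by
  simpa only [mul_comm] using hf.ennreal_const_mul c

theorem MeasureTheory.convexOn_lintegral {α : Type*} [MeasurableSpace α] {μ : Measure α}
    {f : E → α → ℝ≥0∞} (hs : Convex ℝ≥0 s) (hf : ∀ t, ConvexOn ℝ≥0 s (f · t))
    (hf_meas : ∀ x ∈ s, Measurable (f x)) : ConvexOn ℝ≥0 s fun x => ∫⁻ t, f x t ∂μ := by
  refine ⟨hs, fun x hx y hy a b ha hb hab => ?_⟩
  calc ∫⁻ t, f (a • x + b • y) t ∂μ ≤ ∫⁻ t, a • f x t + b • f y t ∂μ :=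
        lintegral_mono fun t => (hf t).2 hx hy ha hb hab
    _ = a • ∫⁻ t, f x t ∂μ + b • ∫⁻ t, f y t ∂μ := by
        simp only [ENNReal.smul_def, smul_eq_mul]
        rw [lintegral_add_left ((hf_meas x hx).const_mul _),
          lintegral_const_mul' _ _ ENNReal.coe_ne_top, lintegral_const_mul' _ _ ENNReal.coe_ne_top]

end ConvexENNReal

section ConvexOfReal

variable {E : Type*} [AddCommMonoid E] [Module ℝ E] {s : Set E}

theorem ConvexOn.ennreal_ofReal {f : E → ℝ} (hf : ConvexOn ℝ s f) :
    ConvexOn ℝ≥0 s fun x => ENNReal.ofReal (f x) := by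
  refine ⟨hf.1.lift ℝ≥0, fun x hx y hy a b _ _ hab => ?_⟩
  have hf_le := hf.2 hx hy a.2 b.2 (by simpa using congrArg ((↑) : ℝ≥0 → ℝ) hab)
  calc ENNReal.ofReal (f (a • x + b • y)) ≤ ENNReal.ofReal (a * f x + b * f y) :=
        ENNReal.ofReal_le_ofReal hf_le
    _ ≤ ENNReal.ofReal (a * f x) + ENNReal.ofReal (b * f y) := ENNReal.ofReal_add_le
    _ = a • ENNReal.ofReal (f x) + b • ENNReal.ofReal (f y) := by
        simp only [ENNReal.ofReal_mul (NNReal.coe_nonneg _), ENNReal.ofReal_coe_nnreal,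
          ENNReal.smul_def, smul_eq_mul]

theorem ConvexOn.le_ofReal_mul_add {f : E → ℝ≥0∞} (hf : ConvexOn ℝ≥0 s f) {x y : E}
    (hx : x ∈ s) (hy : y ∈ s) {a b : ℝ} (ha : 0 ≤ a) (hb : 0 ≤ b) (hab : a + b = 1) :
    f (a • x + b • y) ≤ ENNReal.ofReal a * f x + ENNReal.ofReal b * f y := by
  lift a to ℝ≥0 using ha
  lift b to ℝ≥0 using hb
  have := hf.2 hx hy a.2 b.2 (NNReal.coe_injective (by simpa using hab))
  simpa only [NNReal.smul_def, ENNReal.smul_def, smul_eq_mul, ENNReal.ofReal_coe_nnreal] using this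

end ConvexOfReal

theorem Real.convexOn_cosh : ConvexOn ℝ univ cosh := by
  refine ((convexOn_exp.add (convexOn_exp.comp_linearMap (-LinearMap.id))).smul
    (by norm_num : (0 : ℝ) ≤ 2⁻¹)).congr fun x _ => ?_
  simp [cosh_eq, div_eq_inv_mul]

def symmWeight (β x y : ℝ) : ℝ :=
  x ^ ((β - 1) / 2) / y ^ ((β + 1) / 2) + y ^ ((β - 1) / 2) / x ^ ((β + 1) / 2)

section symmWeight

variable {x y : ℝ}

lemma symmWeight_nonneg (β : ℝ) (hx : 0 ≤ x) (hy : 0 ≤ y) : 0 ≤ symmWeight β x y := by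
  unfold symmWeight
  positivity

lemma symmWeight_eq_cosh (β : ℝ) (hx : 0 < x) (hy : 0 < y) :
    symmWeight β x y = 2 / √(x * y) * cosh (β * (log (x / y) / 2)) := by
  have exp_sub_add_exp_sub (a b c : ℝ) :
      exp (a - c) + exp (b - c) = 2 / exp c * ((exp a + exp b) / 2) := by
    rw [exp_sub, exp_sub]
    ring
  rw [symmWeight, cosh_eq, sqrt_eq_rpow, rpow_def_of_pos (mul_pos hx hy), rpow_def_of_pos hx,
    rpow_def_of_pos hy, rpow_def_of_pos hx, rpow_def_of_pos hy, ← exp_sub, ← exp_sub,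
    ← exp_sub_add_exp_sub, log_mul hx.ne' hy.ne', log_div hx.ne' hy.ne']
  congr 2 <;> ring

lemma symmWeight_zero (hx : 0 < x) (hy : 0 < y) : symmWeight 0 x y = 2 / (√x * √y) := by
  simp [symmWeight_eq_cosh 0 hx hy, sqrt_mul hx.le]

lemma symmWeight_le_symmWeight {β₁ β₂ : ℝ} (hx : 0 < x) (hy : 0 < y) (h₀ : 0 ≤ β₁)
    (h : β₁ ≤ β₂) : symmWeight β₁ x y ≤ symmWeight β₂ x y := by
  rw [symmWeight_eq_cosh _ hx hy, symmWeight_eq_cosh _ hx hy]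
  gcongr
  rw [cosh_le_cosh, abs_mul, abs_mul]
  gcongr

lemma convexOn_symmWeight (hx : 0 < x) (hy : 0 < y) : ConvexOn ℝ univ (symmWeight · x y) := by
  refine ((convexOn_cosh.comp_linearMap (LinearMap.id.smulRight (log (x / y) / 2))).smul
    (by positivity : 0 ≤ 2 / √(x * y))).congr fun β _ => ?_
  simp [symmWeight_eq_cosh β hx hy]

end symmWeight

section Lamb

variable {m : ℝ}

lemma ellm_pos (hm : 0 < m) (s K : R3) {Q : ℝ} (hQ : 0 < Q) : 0 < ellm m s K Q := by
  unfold ellm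
  positivity

lemma Lamb_eq_iSup (β : ℝ) : Lamb m β = ⨆ (s : R3) (K : R3) (Q : ℝ) (_ : 0 < Q),
    ENNReal.ofReal ((‖s‖ ^ 2 + Q ^ 2) / (π ^ 2 * (1 + m))) *
      ∫⁻ t : R3, ENNReal.ofReal (1 / ‖t‖ ^ 2 * symmWeight β (ellm m s K Q) (ellm m t K Q)) *
        ENNReal.ofReal (Dker m s t K Q) := by
  unfold Lamb
  congr! with s K Q hQ t
  exact ENNReal.ofReal_mul
    (mul_nonneg (by positivity) (symmWeight_nonneg _ (sqrt_nonneg _) (sqrt_nonneg _)))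

lemma measurable_Lamb_integrand (β x : ℝ) (s K : R3) (Q : ℝ) : Measurable fun t : R3 =>
    ENNReal.ofReal (1 / ‖t‖ ^ 2 * symmWeight β x (ellm m t K Q)) *
        ENNReal.ofReal (Dker m s t K Q) := by
  unfold symmWeight ellm Dker
  fun_prop

lemma monotoneOn_Lamb (hm : 0 < m) : MonotoneOn (Lamb m) (Ici 0) := by
  intro β₁ h₀ β₂ _ h
  rw [Lamb_eq_iSup, Lamb_eq_iSup]
  gcongr with s K Q hQ t
  exact symmWeight_le_symmWeight (ellm_pos hm s K hQ) (ellm_pos hm t K hQ) h₀ h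

lemma convexOn_Lamb (hm : 0 < m) : ConvexOn ℝ≥0 (Ici 0) (Lamb m) := by
  have hconv : Convex ℝ≥0 (Ici (0 : ℝ)) := convex_Ici 0
  refine ConvexOn.congr ?_ fun β _ => (Lamb_eq_iSup β).symm
  refine ENNReal.convexOn_iSup hconv fun s => ENNReal.convexOn_iSup hconv fun K =>
    ENNReal.convexOn_iSup hconv fun Q => ENNReal.convexOn_iSup hconv fun hQ => ?_
  refine (convexOn_lintegral hconv (fun t => ?_) fun β _ => measurable_Lamb_integrand ..
    ).ennreal_const_mul _
  exact ((((convexOn_symmWeight (ellm_pos hm s K hQ) (ellm_pos hm t K hQ)).subset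
    (subset_univ _) (convex_Ici 0)).smul (by positivity : 0 ≤ 1 / ‖t‖ ^ 2)).ennreal_ofReal
    ).ennreal_mul_const _

lemma Lamb_zero (hm : 0 < m) : Lamb m 0 = 2 * Lam m := by
  simp only [Lamb_eq_iSup, Lam, ENNReal.mul_iSup]
  refine iSup_congr fun s => iSup_congr fun K => iSup_congr fun Q => iSup_congr fun hQ => ?_
  have hs := ellm_pos hm s K hQ
  have integrand_eq (t : R3) :
      ENNReal.ofReal (1 / ‖t‖ ^ 2 * symmWeight 0 (ellm m s K Q) (ellm m t K Q)) *
          ENNReal.ofReal (Dker m s t K Q)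
        = ENNReal.ofReal (2 / √(ellm m s K Q)) *
          ENNReal.ofReal (Dker m s t K Q / (‖t‖ ^ 2 * √(ellm m t K Q))) := by
    rw [symmWeight_zero hs (ellm_pos hm t K hQ), ← ENNReal.ofReal_mul (by positivity),
      ← ENNReal.ofReal_mul (by positivity)]
    congr 1
    ring
  have hC : 0 ≤ (‖s‖ ^ 2 + Q ^ 2) / (π ^ 2 * (1 + m)) := by positivity
  rw [lintegral_congr integrand_eq, lintegral_const_mul' _ _ ENNReal.ofReal_ne_top, ← mul_assoc,
    ← ENNReal.ofReal_mul hC, mul_div_left_comm, ENNReal.ofReal_mul zero_le_two,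
    ENNReal.ofReal_ofNat, mul_assoc]

end Lamb

/-- for fixed `m > 0`, `β ↦ Λ_β(m)` is non-decreasing and convex on
`[0,∞)` (as a function with values in `ℝ≥0∞`), and `Λ₀(m) = 2Λ(m)`. -/
theorem Lamb_monotone_convex_and_Lamb_zero (m : ℝ) (hm : 0 < m) :
    (∀ β₁ β₂ : ℝ, 0 ≤ β₁ → β₁ ≤ β₂ → Lamb m β₁ ≤ Lamb m β₂) ∧
    (∀ β₁ β₂ a b : ℝ, 0 ≤ β₁ → 0 ≤ β₂ → 0 ≤ a → 0 ≤ b → a + b = 1 →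
      Lamb m (a * β₁ + b * β₂)
        ≤ ENNReal.ofReal a * Lamb m β₁ + ENNReal.ofReal b * Lamb m β₂) ∧
    Lamb m 0 = 2 * Lam m :=
  ⟨fun _ _ h₀ h => monotoneOn_Lamb hm h₀ (h₀.trans h) h,
    fun _ _ _ _ h₁ h₂ ha hb hab => (convexOn_Lamb hm).le_ofReal_mul_add h₁ h₂ ha hb hab,
    Lamb_zero hm⟩
end
end

section
/- Let f and g be measurable functions on [−1,1] that are non-negative, even, and non-decreasing on [0,1]. Then for all unit vectors a,b ∈ S² ⊂ ℝ³, ∫_{S²} f(ω·a) g(ω·b) dω ≤ ∫_{S²} f(ω·a) g(ω·a) dω, where dω denotes the surface measure on the unit sphere S². In other words, the integral ∫_{S²} f(ω·a) g(ω·b) dω is largest when a and b are parallel or antiparallel. -/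
open MeasureTheory Real Filter Topology
open scoped InnerProductSpace ENNReal

noncomputable section

/-!
By the layer-cake formula, `∫ f(ω·a) g(ω·b) dω` is the integral over levels `t, u > 0` of the
measure of `{f(ω·a) > t} ∩ {g(ω·b) > u}`, which is at most the smaller of the two measures.
Rotation invariance of the surface measure gives `{g(ω·b) > u}` the same measure as
`{g(ω·a) > u}`, and since `f(ω·a)` and `g(ω·a)` are both non-decreasing functions of `|ω·a|`,
their superlevel sets are nested, so for `b = a` the intersection attains that minimum.
-/

open Set
open scoped Pointwise

section Rearrangement

variable {α : Type*} [MeasurableSpace α] {μ : Measure α} {F G G' : α → ℝ}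

theorem lintegral_ofReal_mul_eq_lintegral_measure_inter (hF : Measurable F) (hG : Measurable G)
    (hF0 : 0 ≤ F) (hG0 : 0 ≤ G) :
    ∫⁻ x, ENNReal.ofReal (F x) * ENNReal.ofReal (G x) ∂μ
      = ∫⁻ u in Ioi 0, ∫⁻ t in Ioi 0, μ ({x | t < F x} ∩ {x | u < G x}) := calc
  _ = ∫⁻ x, ENNReal.ofReal (G x) ∂(μ.withDensity fun x => ENNReal.ofReal (F x)) :=
    (lintegral_withDensity_eq_lintegral_mul _ hF.ennreal_ofReal hG.ennreal_ofReal).symm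
  _ = ∫⁻ u in Ioi 0, (μ.withDensity fun x => ENNReal.ofReal (F x)) {x | u < G x} :=
    lintegral_eq_lintegral_meas_lt _ (.of_forall hG0) hG.aemeasurable
  _ = _ := by
    refine lintegral_congr fun u => ?_
    rw [withDensity_apply _ (measurableSet_lt measurable_const hG),
      lintegral_eq_lintegral_meas_lt _ (.of_forall hF0) hF.aemeasurable]
    refine lintegral_congr fun t => ?_
    rw [Measure.restrict_apply (measurableSet_lt measurable_const hF)]

theorem lintegral_ofReal_mul_le_of_nested (hF : Measurable F) (hG : Measurable G)
    (hG' : Measurable G') (hF0 : 0 ≤ F) (hG0 : 0 ≤ G) (hG'0 : 0 ≤ G')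
    (hnested : ∀ t u : ℝ, {x | t < F x} ⊆ {x | u < G x} ∨ {x | u < G x} ⊆ {x | t < F x})
    (hequi : ∀ u : ℝ, μ {x | u < G' x} = μ {x | u < G x}) :
    ∫⁻ x, ENNReal.ofReal (F x) * ENNReal.ofReal (G' x) ∂μ
      ≤ ∫⁻ x, ENNReal.ofReal (F x) * ENNReal.ofReal (G x) ∂μ := by
  rw [lintegral_ofReal_mul_eq_lintegral_measure_inter hF hG' hF0 hG'0,
    lintegral_ofReal_mul_eq_lintegral_measure_inter hF hG hF0 hG0]
  refine lintegral_mono fun u => lintegral_mono fun t => ?_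
  rcases hnested t u with h | h
  · rw [inter_eq_left.2 h]
    exact measure_mono inter_subset_left
  · rw [inter_eq_right.2 h, ← hequi u]
    exact measure_mono inter_subset_right

theorem integral_mul_le_of_nested (hF : Measurable F) (hG : Measurable G)
    (hG' : Measurable G') (hF0 : 0 ≤ F) (hG0 : 0 ≤ G) (hG'0 : 0 ≤ G')
    (hnested : ∀ t u : ℝ, {x | t < F x} ⊆ {x | u < G x} ∨ {x | u < G x} ⊆ {x | t < F x})
    (hequi : ∀ u : ℝ, μ {x | u < G' x} = μ {x | u < G x})
    (hint : Integrable (fun x => F x * G x) μ) :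
    ∫ x, F x * G' x ∂μ ≤ ∫ x, F x * G x ∂μ := by
  have toReal_lintegral : ∀ H : α → ℝ, Measurable H → 0 ≤ H →
      ∫ x, F x * H x ∂μ = (∫⁻ x, ENNReal.ofReal (F x) * ENNReal.ofReal (H x) ∂μ).toReal := by
    intro H hH hH0
    rw [integral_eq_lintegral_of_nonneg_ae (.of_forall fun x => mul_nonneg (hF0 x) (hH0 x))
      (hF.mul hH).aestronglyMeasurable]
    simp_rw [ENNReal.ofReal_mul (hF0 _)]
  have hfinite : ∫⁻ x, ENNReal.ofReal (F x) * ENNReal.ofReal (G x) ∂μ ≠ ⊤ := by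
    simpa only [← ENNReal.ofReal_mul (hF0 _)] using hint.lintegral_lt_top.ne
  rw [toReal_lintegral G' hG' hG'0, toReal_lintegral G hG hG0]
  exact ENNReal.toReal_mono hfinite
    (lintegral_ofReal_mul_le_of_nested hF hG hG' hF0 hG0 hG'0 hnested hequi)

end Rearrangement

theorem MonotoneOn.setOf_lt_comp_subset_or_subset {α β γ : Type*} [LinearOrder β]
    [LinearOrder γ] {f g : β → γ} {s : Set β} (hf : MonotoneOn f s) (hg : MonotoneOn g s)
    {φ : α → β} (hφ : ∀ x, φ x ∈ s) (t u : γ) :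
    {x | t < f (φ x)} ⊆ {x | u < g (φ x)} ∨ {x | u < g (φ x)} ⊆ {x | t < f (φ x)} := by
  rw [or_iff_not_imp_left, not_subset]
  rintro ⟨x, hfx, hgx⟩ y hgy
  have hxy : φ x ≤ φ y := by
    by_contra! hyx
    exact hgx (hgy.trans_le (hg (hφ y) (hφ x) hyx.le))
  exact hfx.trans_le (hf (hφ x) (hφ y) hxy)

section EvenMonotone

variable {f : ℝ → ℝ} {x : ℝ}

theorem abs_mem_Icc_zero_one (hx : x ∈ Icc (-1 : ℝ) 1) : |x| ∈ Icc (0 : ℝ) 1 :=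
  ⟨abs_nonneg x, abs_le.2 hx⟩

theorem eq_apply_abs_of_even (hfe : ∀ x ∈ Icc (0 : ℝ) 1, f (-x) = f x)
    (hx : x ∈ Icc (-1 : ℝ) 1) : f x = f |x| := by
  rcases le_total 0 x with h | h
  · rw [abs_of_nonneg h]
  · rw [abs_of_nonpos h, ← hfe (-x) ⟨neg_nonneg.2 h, neg_le.2 hx.1⟩, neg_neg]

theorem apply_le_apply_one_of_even (hfe : ∀ x ∈ Icc (0 : ℝ) 1, f (-x) = f x)
    (hfm : MonotoneOn f (Icc (0 : ℝ) 1)) (hx : x ∈ Icc (-1 : ℝ) 1) : f x ≤ f 1 := by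
  rw [eq_apply_abs_of_even hfe hx]
  exact hfm (abs_mem_Icc_zero_one hx) (right_mem_Icc.2 zero_le_one) (abs_le.2 hx)

end EvenMonotone

theorem inner_mem_Icc_of_mem_sphere {E : Type*} [NormedAddCommGroup E] [InnerProductSpace ℝ E]
    (ω : Metric.sphere (0 : E) 1) {c : E} (hc : ‖c‖ = 1) :
    ⟪(ω : E), c⟫_ℝ ∈ Icc (-1 : ℝ) 1 := by
  refine abs_le.1 ?_
  simpa [hc] using abs_real_inner_le_norm (ω : E) c

theorem toSphere_setOf_inner_mem_eq {E : Type*} [NormedAddCommGroup E] [InnerProductSpace ℝ E]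
    [FiniteDimensional ℝ E] [MeasurableSpace E] [BorelSpace E] {a b : E} (hab : ‖a‖ = ‖b‖)
    {S : Set ℝ} (hS : MeasurableSet S) :
    (volume : Measure E).toSphere {ω | ⟪(ω : E), a⟫_ℝ ∈ S}
      = (volume : Measure E).toSphere {ω | ⟪(ω : E), b⟫_ℝ ∈ S} := by
  set e : E ≃ₗᵢ[ℝ] E := Submodule.reflection (ℝ ∙ (a - b))ᗮ
  have he : e a = b := Submodule.reflection_sub hab
  have hmeas : ∀ c : E, MeasurableSet {ω : Metric.sphere (0 : E) 1 | ⟪(ω : E), c⟫_ℝ ∈ S} :=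
    fun c => (continuous_subtype_val.inner continuous_const).measurable hS
  have himage : Subtype.val '' {ω : Metric.sphere (0 : E) 1 | ⟪(ω : E), b⟫_ℝ ∈ S}
      = e '' (Subtype.val '' {ω : Metric.sphere (0 : E) 1 | ⟪(ω : E), a⟫_ℝ ∈ S}) := by
    ext x
    rw [← he, e.image_eq_preimage_symm]
    simp [← e.inner_map_map (e.symm x)]
  have hsmul : ∀ A : Set E, Ioo (0 : ℝ) 1 • e '' A = e '' (Ioo (0 : ℝ) 1 • A) := fun A => by
    simp only [← image2_smul, image_image2_distrib_right (fun r x => e.map_smul r x)]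
  rw [Measure.toSphere_apply' _ (hmeas a), Measure.toSphere_apply' _ (hmeas b), himage, hsmul,
    e.image_eq_preimage_symm,
    e.symm.measurePreserving.measure_preimage_emb e.symm.toHomeomorph.measurableEmbedding]

/-- Lemma 5: if `f` and `g` are measurable, non-negative, even functions
on `[-1,1]` that are non-decreasing on `[0,1]`, then for unit vectors `a, b ∈ S²`,
`∫_{S²} f(ω·a) g(ω·b) dω ≤ ∫_{S²} f(ω·a) g(ω·a) dω`,
where the sphere carries its surface measure. -/
theorem sphere_rearrangement (f g : ℝ → ℝ) (hf : Measurable f) (hg : Measurable g)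
    (hf0 : ∀ x ∈ Set.Icc (-1 : ℝ) 1, 0 ≤ f x) (hg0 : ∀ x ∈ Set.Icc (-1 : ℝ) 1, 0 ≤ g x)
    (hfe : ∀ x ∈ Set.Icc (0 : ℝ) 1, f (-x) = f x)
    (hge : ∀ x ∈ Set.Icc (0 : ℝ) 1, g (-x) = g x)
    (hfm : MonotoneOn f (Set.Icc (0 : ℝ) 1)) (hgm : MonotoneOn g (Set.Icc (0 : ℝ) 1))
    (a b : R3) (ha : ‖a‖ = 1) (hb : ‖b‖ = 1) :
    (∫ ω : Metric.sphere (0 : R3) 1,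
        f ⟪(ω : R3), a⟫_ℝ * g ⟪(ω : R3), b⟫_ℝ ∂((volume : Measure R3).toSphere))
      ≤ ∫ ω : Metric.sphere (0 : R3) 1,
          f ⟪(ω : R3), a⟫_ℝ * g ⟪(ω : R3), a⟫_ℝ ∂((volume : Measure R3).toSphere) := by
  have hmeas : ∀ h : ℝ → ℝ, Measurable h → ∀ c : R3,
      Measurable fun ω : Metric.sphere (0 : R3) 1 => h ⟪(ω : R3), c⟫_ℝ :=
    fun h hh c => hh.comp (continuous_subtype_val.inner continuous_const).measurable
  have hmem : ∀ ω : Metric.sphere (0 : R3) 1, ⟪(ω : R3), a⟫_ℝ ∈ Icc (-1 : ℝ) 1 :=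
    fun ω => inner_mem_Icc_of_mem_sphere ω ha
  apply integral_mul_le_of_nested (hmeas f hf a) (hmeas g hg a) (hmeas g hg b)
    (fun ω => hf0 _ (hmem ω)) (fun ω => hg0 _ (hmem ω))
    (fun ω => hg0 _ (inner_mem_Icc_of_mem_sphere ω hb))
  · intro t u
    simpa only [← fun ω => eq_apply_abs_of_even hfe (hmem ω),
      ← fun ω => eq_apply_abs_of_even hge (hmem ω)] using
      hfm.setOf_lt_comp_subset_or_subset hgm (fun ω => abs_mem_Icc_zero_one (hmem ω)) t u
  · exact fun u => toSphere_setOf_inner_mem_eq (hb.trans ha.symm) (hg measurableSet_Ioi)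
  · refine Integrable.of_bound ((hmeas f hf a).mul (hmeas g hg a)).aestronglyMeasurable
      (f 1 * g 1) (.of_forall fun ω => ?_)
    rw [Real.norm_of_nonneg (mul_nonneg (hf0 _ (hmem ω)) (hg0 _ (hmem ω)))]
    exact mul_le_mul (apply_le_apply_one_of_even hfe hfm (hmem ω))
      (apply_le_apply_one_of_even hge hgm (hmem ω)) (hg0 _ (hmem ω))
      (hf0 1 (right_mem_Icc.2 (by norm_num)))
end
end

section
/- For every p∈ℝ³, the function k ↦ 2/|k|² − 1/|k−p|² − 1/|k+p|² is Lebesgue integrable on ℝ³ and its integral equals 0. Equivalently, for every p∈ℝ³, lim_{K→∞} ∫_{{k∈ℝ³ : |k|<K}} ( 1/|k|² − 1/|k−p|² ) dk = 0. -/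
open MeasureTheory Real Filter Topology
open scoped InnerProductSpace ENNReal

noncomputable section

/-!
Write `φ k = 1 / ‖k‖ ^ 2` and `D_p φ k = 2 φ k - φ (k - p) - φ (k + p)` (`secondDiff φ p k`).
Since `‖k‖⁻²` is locally integrable in dimension `3 > 2` and `D_p φ k = O(‖p‖² / ‖k‖⁴)` at infinity
with `4 > 3`, `D_p φ` is integrable. Its integral `I(p)` is computed twice for the step `2p`: the
identity `D_{2p} φ k = D_p φ (k + p) + D_p φ (k - p) + 2 D_p φ k` and translation invariance give
`I(2p) = 4 I(p)`, while `φ (2k) = φ k / 4` and the substitution `k ↦ 2k` give `I(2p) = 2³ I(p) / 4`.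
Hence `I(p) = 0`. Over a ball, the reflection `k ↦ -k` turns `∫ (φ k - φ (k - p))` into
`∫ (φ k - φ (k + p))`, so it is half of `∫ D_p φ`, which tends to `I(p) = 0`.
-/

open Asymptotics Metric Module

lemma MeasureTheory.LocallyIntegrable.comp_sub_right {G F : Type*} [AddGroup G]
    [TopologicalSpace G] [IsTopologicalAddGroup G] [MeasurableSpace G] [BorelSpace G]
    [NormedAddCommGroup F] {μ : Measure G} [μ.IsAddRightInvariant]
    {f : G → F} (hf : LocallyIntegrable f μ) (a : G) :
    LocallyIntegrable (fun x => f (x - a)) μ := by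
  rw [← map_sub_right_eq_self μ a] at hf
  exact (locallyIntegrable_map_homeomorph (Homeomorph.subRight a)).1 hf

lemma MeasureTheory.LocallyIntegrable.comp_add_right {G F : Type*} [AddGroup G]
    [TopologicalSpace G] [IsTopologicalAddGroup G] [MeasurableSpace G] [BorelSpace G]
    [NormedAddCommGroup F] {μ : Measure G} [μ.IsAddRightInvariant]
    {f : G → F} (hf : LocallyIntegrable f μ) (a : G) :
    LocallyIntegrable (fun x => f (x + a)) μ := by
  simpa only [sub_neg_eq_add] using hf.comp_sub_right (-a)

def secondDiff {E : Type*} [AddCommGroup E] (φ : E → ℝ) (p k : E) : ℝ :=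
  2 * φ k - φ (k - p) - φ (k + p)

lemma secondDiff_add_self {E : Type*} [AddCommGroup E] (φ : E → ℝ) (p k : E) :
    secondDiff φ (p + p) k =
      secondDiff φ p (k + p) + secondDiff φ p (k - p) + 2 * secondDiff φ p k := by
  simp only [secondDiff, add_sub_cancel_right, sub_add_cancel, add_assoc, sub_sub]
  ring

lemma MeasureTheory.LocallyIntegrable.secondDiff {G : Type*} [AddCommGroup G]
    [TopologicalSpace G] [IsTopologicalAddGroup G] [MeasurableSpace G] [BorelSpace G]
    {μ : Measure G} [μ.IsAddRightInvariant] {φ : G → ℝ} (hφ : LocallyIntegrable φ μ) (p : G) :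
    LocallyIntegrable (secondDiff φ p) μ :=
  ((hφ.smul (2 : ℝ)).sub (hφ.comp_sub_right p)).sub (hφ.comp_add_right p)

section NormedSpace

variable {E : Type*} [NormedAddCommGroup E] [NormedSpace ℝ E] [FiniteDimensional ℝ E]
  [MeasurableSpace E] [BorelSpace E] {μ : Measure E} [μ.IsAddHaarMeasure]

lemma locallyIntegrable_one_div_norm_sq (hd : 2 < finrank ℝ E) :
    LocallyIntegrable (fun x : E => 1 / ‖x‖ ^ 2) μ := by
  refine locallyIntegrable_of_norm_le_rpow (C := 1) (α := 2) (by omega) (by exact_mod_cast hd)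
    (ae_of_all _ fun x => ?_) (by fun_prop : Measurable _).aestronglyMeasurable
  rw [one_mul, rpow_neg (norm_nonneg x), norm_of_nonneg (by positivity), one_div]
  norm_cast

theorem integral_secondDiff_eq_zero {φ : E → ℝ} {c : ℝ} (hφ : ∀ x, φ ((2 : ℝ) • x) = c * φ x)
    (hc : c * 2 ^ finrank ℝ E ≠ 4) {p : E} (hint : Integrable (secondDiff φ p) μ) :
    ∫ k, secondDiff φ p k ∂μ = 0 := by
  set I := ∫ k, secondDiff φ p k ∂μ
  have htranslate : ∫ k, secondDiff φ (p + p) k ∂μ = 4 * I := by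
    simp_rw [secondDiff_add_self]
    rw [integral_add ?_ (hint.const_mul 2),
      integral_add (hint.comp_add_right p) (hint.comp_sub_right p), integral_const_mul,
      integral_add_right_eq_self (secondDiff φ p), integral_sub_right_eq_self (secondDiff φ p)]
    · ring
    · exact (hint.comp_add_right p).add (hint.comp_sub_right p)
  have hscale : ∫ k, secondDiff φ (p + p) ((2 : ℝ) • k) ∂μ = c * I := by
    have (k : E) : secondDiff φ (p + p) ((2 : ℝ) • k) = c * secondDiff φ p k := by
      simp only [secondDiff, ← two_smul ℝ p, ← smul_sub, ← smul_add, hφ]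
      ring
    simp_rw [this, integral_const_mul, I]
  rw [Measure.integral_comp_smul, htranslate, smul_eq_mul, abs_of_nonneg (by positivity)] at hscale
  have hpow : (2 : ℝ) ^ finrank ℝ E ≠ 0 := by positivity
  have : (c * 2 ^ finrank ℝ E - 4) * I = 0 := by
    field_simp at hscale
    linarith
  exact (mul_eq_zero.1 this).resolve_left (sub_ne_zero.2 hc)

lemma setIntegral_ball_sub_eq_half_secondDiff {φ : E → ℝ} (hφ : ∀ x, φ (-x) = φ x)
    (hloc : LocallyIntegrable φ μ) (p : E) (r : ℝ) :
    ∫ k in ball 0 r, (φ k - φ (k - p)) ∂μ = 2⁻¹ * ∫ k in ball 0 r, secondDiff φ p k ∂μ := by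
  have hball {f : E → ℝ} (hf : LocallyIntegrable f μ) : IntegrableOn f (ball 0 r) μ :=
    (hf.integrableOn_isCompact (isCompact_closedBall 0 r)).mono_set ball_subset_closedBall
  have hsub : IntegrableOn (fun k => φ k - φ (k - p)) (ball 0 r) μ :=
    hball (hloc.sub (hloc.comp_sub_right p))
  have hadd : IntegrableOn (fun k => φ k - φ (k + p)) (ball 0 r) μ :=
    hball (hloc.sub (hloc.comp_add_right p))
  have hreflect :
      ∫ k in ball 0 r, (φ k - φ (k + p)) ∂μ = ∫ k in ball 0 r, (φ k - φ (k - p)) ∂μ := by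
    have := (Measure.measurePreserving_neg μ).setIntegral_preimage_emb
      (MeasurableEquiv.neg E).measurableEmbedding (fun k => φ k - φ (k - p)) (ball 0 r)
    simp only [Set.neg_preimage, neg_ball, neg_zero, ← neg_add', hφ] at this
    exact this
  have hsplit : ∫ k in ball 0 r, secondDiff φ p k ∂μ =
      ∫ k in ball 0 r, (φ k - φ (k - p)) ∂μ + ∫ k in ball 0 r, (φ k - φ (k + p)) ∂μ := by
    rw [← integral_add hsub hadd]
    congr with k
    rw [secondDiff]
    ring
  rw [hsplit, hreflect]
  ring

end NormedSpace

lemma abs_two_div_sub_one_div_sub_one_div_le {s a t : ℝ} (hs : 0 < s) (ha : 0 ≤ a) (has : a ≤ s)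
    (ht : t ^ 2 ≤ a * s) (hy : s / 4 ≤ s - 2 * t + a) (hz : s / 4 ≤ s + 2 * t + a) :
    |2 / s - 1 / (s - 2 * t + a) - 1 / (s + 2 * t + a)| ≤ 96 * a / s ^ 2 := by
  have hy0 : 0 < s - 2 * t + a := by linarith
  have hz0 : 0 < s + 2 * t + a := by linarith
  have hnum : |2 * a * s + 2 * a ^ 2 - 8 * t ^ 2| ≤ 6 * a * s := by
    rw [abs_le]
    constructor <;> nlinarith
  have hden : s * (s / 4) * (s / 4) ≤ s * (s - 2 * t + a) * (s + 2 * t + a) := by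
    gcongr
  calc |2 / s - 1 / (s - 2 * t + a) - 1 / (s + 2 * t + a)|
      = |2 * a * s + 2 * a ^ 2 - 8 * t ^ 2| / (s * (s - 2 * t + a) * (s + 2 * t + a)) := by
        rw [← abs_of_pos (by positivity : 0 < s * (s - 2 * t + a) * (s + 2 * t + a)), ← abs_div]
        congr 1
        field_simp
        ring
    _ ≤ 6 * a * s / (s * (s / 4) * (s / 4)) := by gcongr
    _ = 96 * a / s ^ 2 := by
        field_simp
        ring

section InnerProductSpace

variable {E : Type*} [NormedAddCommGroup E] [InnerProductSpace ℝ E]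

lemma abs_secondDiff_one_div_norm_sq_le {p k : E} (hk : 2 * ‖p‖ ≤ ‖k‖) :
    |secondDiff (fun x : E => 1 / ‖x‖ ^ 2) p k| ≤ 96 * ‖p‖ ^ 2 / ‖k‖ ^ 4 := by
  rcases eq_or_ne k 0 with rfl | hk0
  · obtain rfl : p = 0 := norm_le_zero_iff.1 (by rw [norm_zero] at hk; linarith)
    simp [secondDiff]
  have hsub : ‖k‖ / 2 ≤ ‖k - p‖ := by linarith [norm_sub_norm_le k p]
  have hadd : ‖k‖ / 2 ≤ ‖k + p‖ := by linarith [norm_sub_le_norm_add k p]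
  have hinner : ⟪k, p⟫_ℝ ^ 2 ≤ ‖p‖ ^ 2 * ‖k‖ ^ 2 := by
    rw [← sq_abs, ← mul_pow, mul_comm]
    gcongr
    exact abs_real_inner_le_norm k p
  rw [show ‖k‖ ^ 4 = (‖k‖ ^ 2) ^ 2 by ring]
  convert abs_two_div_sub_one_div_sub_one_div_le (by positivity) (by positivity)
    (by gcongr; linarith [norm_nonneg p]) hinner ?_ ?_ using 4
  · rw [secondDiff, norm_sub_sq_real, norm_add_sq_real, mul_one_div]
  · rw [← norm_sub_sq_real]; nlinarith [pow_le_pow_left₀ (by positivity) hsub 2]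
  · rw [← norm_add_sq_real]; nlinarith [pow_le_pow_left₀ (by positivity) hadd 2]

variable [FiniteDimensional ℝ E]

lemma secondDiff_one_div_norm_sq_isBigO (p : E) :
    secondDiff (fun x : E => 1 / ‖x‖ ^ 2) p =O[cocompact E] fun k => (1 + ‖k‖) ^ (-4 : ℝ) := by
  refine IsBigO.of_bound (16 * (96 * ‖p‖ ^ 2)) ?_
  filter_upwards [tendsto_norm_cocompact_atTop.eventually_ge_atTop (max (2 * ‖p‖) 1)] with k hk
  have hk1 : 1 ≤ ‖k‖ := le_of_max_le_right hk
  have hpow : (1 + ‖k‖) ^ 4 ≤ 16 * ‖k‖ ^ 4 := by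
    calc (1 + ‖k‖) ^ 4 ≤ (2 * ‖k‖) ^ 4 := by gcongr; linarith
      _ = 16 * ‖k‖ ^ 4 := by ring
  rw [norm_eq_abs, norm_of_nonneg (by positivity), rpow_neg (by positivity),
    show (4 : ℝ) = (4 : ℕ) by norm_num, rpow_natCast, ← div_eq_mul_inv]
  calc |secondDiff (fun x : E => 1 / ‖x‖ ^ 2) p k| ≤ 96 * ‖p‖ ^ 2 / ‖k‖ ^ 4 :=
        abs_secondDiff_one_div_norm_sq_le (le_of_max_le_left hk)
    _ = 16 * (96 * ‖p‖ ^ 2) / (16 * ‖k‖ ^ 4) := by field_simp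
    _ ≤ 16 * (96 * ‖p‖ ^ 2) / (1 + ‖k‖) ^ 4 := by gcongr

variable [MeasurableSpace E] [BorelSpace E] {μ : Measure E} [μ.IsAddHaarMeasure]

theorem integrable_secondDiff_one_div_norm_sq (hd : finrank ℝ E = 3) (p : E) :
    Integrable (secondDiff (fun x : E => 1 / ‖x‖ ^ 2) p) μ :=
  ((locallyIntegrable_one_div_norm_sq (by omega)).secondDiff p).integrable_of_isBigO_cocompact
    (secondDiff_one_div_norm_sq_isBigO p)
    ((integrable_one_add_norm (by rw [hd]; norm_num)).integrableAtFilter _)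

end InnerProductSpace

/-- for every `p ∈ ℝ³`, the function
`k ↦ 2/|k|² - 1/|k-p|² - 1/|k+p|²` is integrable on `ℝ³` with integral `0`;
equivalently, `lim_{K→∞} ∫_{|k|<K} (1/|k|² - 1/|k-p|²) dk = 0`. -/
theorem integral_inverse_square_shift (p : R3) :
    Integrable (fun k : R3 =>
      2 / ‖k‖ ^ 2 - 1 / ‖k - p‖ ^ 2 - 1 / ‖k + p‖ ^ 2) ∧
    (∫ k : R3, (2 / ‖k‖ ^ 2 - 1 / ‖k - p‖ ^ 2 - 1 / ‖k + p‖ ^ 2)) = 0 ∧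
    Filter.Tendsto
      (fun K : ℝ => ∫ k in Metric.ball (0 : R3) K, (1 / ‖k‖ ^ 2 - 1 / ‖k - p‖ ^ 2))
      Filter.atTop (nhds 0) := by
  have hd : finrank ℝ R3 = 3 := finrank_euclideanSpace_fin
  have hsd : secondDiff (fun x : R3 => 1 / ‖x‖ ^ 2) p =
      fun k => 2 / ‖k‖ ^ 2 - 1 / ‖k - p‖ ^ 2 - 1 / ‖k + p‖ ^ 2 := by
    ext k
    rw [secondDiff, mul_one_div]
  have hint : Integrable (secondDiff (fun x : R3 => 1 / ‖x‖ ^ 2) p) :=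
    integrable_secondDiff_one_div_norm_sq hd p
  have hzero : ∫ k, secondDiff (fun x : R3 => 1 / ‖x‖ ^ 2) p k = 0 := by
    refine integral_secondDiff_eq_zero (c := 4⁻¹) (fun x => ?_) (by rw [hd]; norm_num) hint
    rw [norm_smul, Real.norm_two]
    ring
  refine ⟨hsd ▸ hint, hsd ▸ hzero, ?_⟩
  have hball :=
    (aecover_ball (x := (0 : R3)) tendsto_id).integral_tendsto_of_countably_generated hint
  rw [hzero] at hball
  refine (mul_zero (2⁻¹ : ℝ) ▸ hball.const_mul 2⁻¹).congr fun K => ?_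
  exact (setIntegral_ball_sub_eq_half_secondDiff (fun x => by rw [norm_neg])
    (locallyIntegrable_one_div_norm_sq (by omega)) p K).symm
end
end
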